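/- For every natural number l, r_{l+1} = Σ_{k=0}^{l} C(l,k) s_k, where r_m = Σ_j S(m,j)·j! and s_k = Σ_j S(k,j)·(j+1)!. -/

import Mathlib

def stirling2 : ℕ → ℕ → ℕ
  | 0, 0 => 1
  | 0, _ + 1 => 0
  | _ + 1, 0 => 0
  | n + 1, k + 1 => stirling2 n k + (k + 1) * stirling2 n (k + 1)

/-- Fubini number: number of preferential arrangements of an `l`-set. -/
def fubini (l : ℕ) : ℕ := ∑ k ∈ Finset.range (l + 1), stirling2 l k * Nat.factorial k

/-- Barred preferential arrangement number. -/
def barredFubini (l : ℕ) : ℕ :=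
  ∑ k ∈ Finset.range (l + 1), stirling2 l k * Nat.factorial (k + 1)

/-!
Removing the block that contains the last element of an `(n+1)`-set partitioned into `m+1`
blocks leaves a partition of the remaining `k` elements into `m` blocks, so
`S(n+1, m+1) = ∑ₖ C(n,k) S(k,m)`. Substituting this into `r_{l+1} = ∑ₘ S(l+1, m+1) (m+1)!`
and exchanging the two sums gives `∑ₖ C(l,k) ∑ₘ S(k,m) (m+1)! = ∑ₖ C(l,k) s_k`.
-/

open Finset Nat

theorem stirling2_eq_stirlingSecond : ∀ n k : ℕ, stirling2 n k = stirlingSecond n k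
  | 0, 0 | 0, _ + 1 | _ + 1, 0 => rfl
  | n + 1, k + 1 => by
    rw [stirling2, stirlingSecond_succ_succ, stirling2_eq_stirlingSecond n k,
      stirling2_eq_stirlingSecond n (k + 1), add_comm]

theorem Nat.stirlingSecond_succ_succ_eq_sum_choose_mul (n m : ℕ) :
    stirlingSecond (n + 1) (m + 1) = ∑ k ∈ range (n + 1), n.choose k * stirlingSecond k m := by
  induction n generalizing m with
  | zero => simp [stirlingSecond_succ_succ]
  | succ n ih =>
    have pascal := sum_choose_succ_mul (R := ℕ) (fun k _ ↦ stirlingSecond k m) n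
    simp only [Nat.cast_id] at pascal
    rw [pascal, ← ih]
    cases m with
    | zero => simp [stirlingSecond_succ_succ]
    | succ m =>
      simp only [stirlingSecond_succ_succ (n + 1), stirlingSecond_succ_succ _ m, mul_add,
        sum_add_distrib, mul_left_comm _ (m + 1), ← mul_sum, ← ih]
      ring

theorem Nat.sum_range_stirlingSecond_mul_of_le {k N : ℕ} (hk : k ≤ N) (f : ℕ → ℕ) :
    ∑ m ∈ range (N + 1), stirlingSecond k m * f m =
      ∑ m ∈ range (k + 1), stirlingSecond k m * f m := by
  refine (sum_subset (range_subset_range.2 (by omega)) fun m _ hm ↦ ?_).symm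
  rw [stirlingSecond_eq_zero_of_lt (by simpa using hm), zero_mul]

theorem stmt_14 (l : ℕ) :
    fubini (l + 1) = ∑ k ∈ Finset.range (l + 1), l.choose k * barredFubini k := by
  simp only [fubini, barredFubini, stirling2_eq_stirlingSecond]
  rw [sum_range_succ', stirlingSecond_succ_zero, zero_mul, add_zero]
  simp_rw [stirlingSecond_succ_succ_eq_sum_choose_mul, sum_mul, mul_assoc]
  rw [sum_comm]
  refine sum_congr rfl fun k hk ↦ ?_
  rw [← mul_sum, sum_range_stirlingSecond_mul_of_le (mem_range_succ_iff.1 hk)]
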